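/- arXiv:1403.3896 — 4 statements merged into one kernel-verified Lean document; each statement's English description precedes it below -/
import Mathlib

section
/- Let G be a group, N a normal subgroup of G, u ∈ N and h ∈ G. Then u·(h⁻¹uh)·(h⁻²uh²) is congruent to u³·[u,h]³·[[u,h],h] modulo the commutator subgroup [N,N], where [a,b] = a⁻¹b⁻¹ab. -/
/-! Modulo `[N, N]` the elements of `N` commute with each other, in particular `u` with its
conjugate `h⁻¹uh`. Writing `a = u`, `b = h⁻¹uh`, `c = h⁻²uh²`, we have `[u,h] = a⁻¹b` and
`[[u,h],h] = b⁻¹ab⁻¹c`, so the right-hand side is `a³(a⁻¹b)³b⁻¹ab⁻¹c = b²ab⁻¹c = abc` once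
`a` and `b` commute. -/

theorem Commute.mk_quotient_commutator {G : Type*} [Group G] {N : Subgroup G} [N.Normal]
    {x y : G} (hx : x ∈ N) (hy : y ∈ N) : Commute (x : G ⧸ ⁅N, N⁆) (y : G ⧸ ⁅N, N⁆) := by
  have hcomm := (QuotientGroup.eq_one_iff _).mpr (Subgroup.commutator_mem_commutator hx hy)
  rwa [← QuotientGroup.mk'_apply, map_commutatorElement, commutatorElement_eq_one_iff_commute]
    at hcomm

theorem cube_mul_commutator_cube_eq_mul_conj_mul_conj_sq {Q : Type*} [Group Q] (a h : Q)
    (hab : Commute a (h⁻¹ * a * h)) :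
    a ^ 3 * (a⁻¹ * h⁻¹ * a * h) ^ 3 *
        ((a⁻¹ * h⁻¹ * a * h)⁻¹ * h⁻¹ * (a⁻¹ * h⁻¹ * a * h) * h) =
      a * (h⁻¹ * a * h) * (h⁻¹ * h⁻¹ * a * h * h) := by
  set b := h⁻¹ * a * h with hb
  set c := h⁻¹ * h⁻¹ * a * h * h with hc
  calc a ^ 3 * (a⁻¹ * h⁻¹ * a * h) ^ 3 *
        ((a⁻¹ * h⁻¹ * a * h)⁻¹ * h⁻¹ * (a⁻¹ * h⁻¹ * a * h) * h)
      = a ^ 3 * (a⁻¹ * b) ^ 3 * (b⁻¹ * a * b⁻¹ * c) := by rw [hb, hc]; group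
    _ = a ^ 3 * (a⁻¹ ^ 3 * b ^ 3) * (b⁻¹ * a * b⁻¹ * c) := by rw [hab.inv_left.mul_pow]
    _ = b ^ 2 * a * (b⁻¹ * c) := by group
    _ = a * b ^ 2 * (b⁻¹ * c) := by rw [(hab.symm.pow_left 2).eq]
    _ = a * b * c := by group

/-- Let `G` be a group, `N` a normal subgroup, `u ∈ N`, `h ∈ G`. Then
`u·(h⁻¹uh)·(h⁻²uh²)` is congruent to `u³·[u,h]³·[[u,h],h]` modulo `[N,N]`,
where `[a,b] = a⁻¹b⁻¹ab`. -/
theorem trace_cube_congr (G : Type*) [Group G] (N : Subgroup G) [N.Normal]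
    (u h : G) (hu : u ∈ N) :
    (u * (h⁻¹ * u * h) * (h⁻¹ * h⁻¹ * u * h * h))⁻¹ *
      (u ^ 3 * (u⁻¹ * h⁻¹ * u * h) ^ 3 *
        ((u⁻¹ * h⁻¹ * u * h)⁻¹ * h⁻¹ * (u⁻¹ * h⁻¹ * u * h) * h)) ∈ ⁅N, N⁆ := by
  have hconj : h⁻¹ * u * h ∈ N := by simpa using ‹N.Normal›.conj_mem u hu h⁻¹
  rw [← QuotientGroup.eq]
  simp only [QuotientGroup.mk_mul, QuotientGroup.mk_inv, QuotientGroup.mk_pow]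
  refine (cube_mul_commutator_cube_eq_mul_conj_mul_conj_sq _ _ ?_).symm
  simpa only [QuotientGroup.mk_mul, QuotientGroup.mk_inv] using
    Commute.mk_quotient_commutator hu hconj
end

section
/- Let p ≥ 3 be odd and G the extraspecial group of order p³ and exponent p² (i.e., G = ⟨x,y : xᵖ = [y,x], yᵖ = 1, [y,x] central of order p⟩). Then for each of the p+1 maximal subgroups M_i of G, the kernel of the transfer V_i : G/[G,G] → M_i/[M_i,M_i] equals M₁/[G,G] where M₁ = ⟨y, [G,G]⟩. In particular, all p+1 transfer kernels coincide. -/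
/-!
Every maximal subgroup `M` of the `p`-group `G` is normal of index `p`, abelian of order `p²`,
and contains `z = y⁻¹x⁻¹yx = xᵖ`. Let `g` be one of the generators and `t` the other one, so that
`t⁻¹ g t = g c` with `c = z^{±1}` central. If `g ∉ M`, then `gᵖ` is central and the transfer sends
`g` to `gᵖ`. If `g ∈ M`, then `t` generates `G/M` and the transfer sends `g` to
`∏_{i<p} t⁻ⁱ g tⁱ = gᵖ c^{p(p-1)/2} = gᵖ`, because `p` is odd. So in all cases `V(y) = yᵖ = 1` and
`V(x) = xᵖ = z ≠ 1`: the kernel of `V` is a proper subgroup containing `⟨y, [G,G]⟩`, which has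
index `p`.
-/

open Subgroup
open scoped commutatorElement

section PGroup

variable {G : Type*} [Group G] [Finite G] {p : ℕ} [Fact p.Prime]

theorem IsPGroup.normal_of_isCoatom (hG : IsPGroup p G) {M : Subgroup G} (hM : IsCoatom M) :
    M.Normal :=
  have := hG.isNilpotent
  Group.normalizerCondition_of_isNilpotent.normal_of_coatom M hM

theorem IsPGroup.index_eq_of_isCoatom (hG : IsPGroup p G) {M : Subgroup G} [M.Normal]
    (hM : IsCoatom M) : M.index = p := by
  have : IsSimpleOrder (Subgroup (G ⧸ M)) :=
    (OrderIso.isSimpleOrder_iff (β := Set.Ici M) (QuotientGroup.comapMk'OrderIso M)).mpr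
      (Set.isSimpleOrder_Ici_iff_isCoatom.mpr hM)
  have : Nontrivial (G ⧸ M) := QuotientGroup.nontrivial_iff.mpr hM.1
  obtain ⟨n, hn, hcard⟩ := (hG.to_quotient M).nontrivial_iff_card.mp this
  obtain ⟨a, ha⟩ := exists_prime_orderOf_dvd_card' p (hcard ▸ dvd_pow_self p hn.ne')
  have htop : zpowers a = ⊤ := (eq_bot_or_eq_top (zpowers a)).resolve_left fun h => by
    rw [zpowers_eq_bot] at h
    rw [h, orderOf_one] at ha
    exact (Fact.out : p.Prime).one_lt.ne ha
  rw [index_eq_card, ← card_top, ← htop, Nat.card_zpowers, ha]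

theorem IsPGroup.commutator_le_of_isCoatom (hG : IsPGroup p G) {M : Subgroup G}
    (hM : IsCoatom M) : commutator G ≤ M := by
  have := hG.normal_of_isCoatom hM
  have := isCyclic_of_prime_card (index_eq_card M ▸ hG.index_eq_of_isCoatom hM)
  exact Normal.quotient_commutative_iff_commutator_le.mp inferInstance

theorem card_eq_prime_pow_of_isCoatom {n : ℕ} (hcard : Nat.card G = p ^ (n + 1))
    {M : Subgroup G} (hM : IsCoatom M) : Nat.card M = p ^ n := by
  have hG := IsPGroup.of_card hcard
  have := hG.normal_of_isCoatom hM
  have := M.card_mul_index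
  rw [hG.index_eq_of_isCoatom hM, hcard, pow_succ] at this
  exact Nat.eq_of_mul_eq_mul_right (Fact.out : p.Prime).pos this

end PGroup

section Group

variable {G : Type*} [Group G]

theorem conj_pow_eq_mul_pow {t g c : G} (hconj : t⁻¹ * g * t = g * c) (htc : Commute t c)
    (i : ℕ) : (t ^ i)⁻¹ * g * t ^ i = g * c ^ i := by
  induction i with
  | zero => simp
  | succ i ih =>
    calc (t ^ (i + 1))⁻¹ * g * t ^ (i + 1) = t⁻¹ * ((t ^ i)⁻¹ * g * t ^ i) * t := by group
      _ = (t⁻¹ * g * t) * c ^ i := by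
        rw [ih, mul_assoc, mul_assoc, ← (htc.pow_right i).eq]; group
      _ = g * c ^ (i + 1) := by rw [hconj, pow_succ']; group

open scoped IsMulCommutative in
theorem Abelianization.of_injective [IsMulCommutative G] :
    Function.Injective (Abelianization.of : G →* Abelianization G) :=
  Abelianization.equivOfComm.injective

namespace Subgroup

theorem orderOf_mk_eq_index_of_notMem {H : Subgroup G} [H.Normal] (hp : H.index.Prime) {g : G}
    (hg : g ∉ H) : orderOf (g : G ⧸ H) = H.index :=
  (hp.eq_one_or_self_of_dvd _ (H.index_eq_card ▸ _root_.orderOf_dvd_natCard _)).resolve_left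
    fun h => hg ((QuotientGroup.eq_one_iff g).mp (orderOf_eq_one_iff.mp h))

theorem index_dvd_of_closure_pair_eq_top {N : Subgroup G} [N.Normal] {x y : G}
    (hgen : closure {x, y} = ⊤) (hy : y ∈ N) {n : ℕ} (hx : x ^ n ∈ N) : N.index ∣ n := by
  have htop : zpowers (x : G ⧸ N) = ⊤ := by
    rw [← map_top_of_surjective _ (QuotientGroup.mk'_surjective N), ← hgen, MonoidHom.map_closure,
      Set.image_pair, QuotientGroup.mk'_apply, QuotientGroup.mk'_apply,
      (QuotientGroup.eq_one_iff y).mpr hy, Set.pair_comm, closure_insert_one, zpowers_eq_closure]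
  rw [index_eq_card, ← card_top, ← htop, Nat.card_zpowers]
  exact orderOf_dvd_of_pow_eq_one (by rwa [← QuotientGroup.mk_pow, QuotientGroup.eq_one_iff])

theorem eq_of_le_of_index_dvd_prime {N K : Subgroup G} (hNK : N ≤ K) (hK : K ≠ ⊤) {p : ℕ}
    (hp : p.Prime) (hN : N.index ∣ p) : N = K := by
  have hKp : K.index = p :=
    (hp.eq_one_or_self_of_dvd _ ((index_dvd_of_le hNK).trans hN)).resolve_left
      (mt index_eq_one.mp hK)
  have hNp : N.index = p := Nat.dvd_antisymm hN (hKp ▸ index_dvd_of_le hNK)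
  have hrel := relIndex_mul_index hNK
  rw [hKp, hNp, Nat.mul_eq_right hp.ne_zero] at hrel
  exact le_antisymm hNK (relIndex_eq_one.mp hrel)

end Subgroup

theorem MonoidHom.ker_eq_closure_insert_commutator {A : Type*} [CommGroup A] (f : G →* A)
    {x y : G} (hgen : closure {x, y} = ⊤) {p : ℕ} (hp : p.Prime) (hxp : x ^ p ∈ commutator G)
    (hy : f y = 1) (hx : f x ≠ 1) : f.ker = closure (insert y (commutator G : Set G)) := by
  have hcomm : commutator G ≤ closure (insert y (commutator G : Set G)) :=
    fun _ h => subset_closure (Set.mem_insert_of_mem _ h)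
  have := Normal.of_commutator_le (h := hcomm)
  refine (eq_of_le_of_index_dvd_prime ?_ (fun h => hx ((eq_top_iff' _).mp h x)) hp
    (index_dvd_of_closure_pair_eq_top hgen (subset_closure (Set.mem_insert y _))
      (hcomm hxp))).symm
  exact (closure_le _).mpr (Set.insert_subset_iff.mpr ⟨hy, Abelianization.commutator_subset_ker f⟩)

end Group

namespace MonoidHom

variable {G : Type*} [Group G] {A : Type*} [CommGroup A] {H : Subgroup G} [hH : H.Normal]
  (ϕ : H →* A)

theorem map_conj_eq_of_mk_eq {g : G} (hg : g ∈ H) {a b : G} (hab : (a : G ⧸ H) = b) :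
    ϕ ⟨a⁻¹ * g * a, hH.conj_mem' g hg a⟩ = ϕ ⟨b⁻¹ * g * b, hH.conj_mem' g hg b⟩ := by
  obtain ⟨h, rfl⟩ : ∃ h : H, b = a * h := ⟨⟨a⁻¹ * b, QuotientGroup.eq.mp hab⟩, by simp⟩
  have : (⟨(a * h)⁻¹ * g * (a * h), hH.conj_mem' g hg _⟩ : H) =
      h⁻¹ * ⟨a⁻¹ * g * a, hH.conj_mem' g hg a⟩ * h :=
    Subtype.ext (by simp [mul_assoc])
  rw [this, map_mul, map_mul, map_inv, mul_comm, mul_inv_cancel_left]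

variable [H.FiniteIndex]

theorem transfer_eq_prod_range_of_mem {t : G} (ht : orderOf (t : G ⧸ H) = H.index) {g : G}
    (hg : g ∈ H) :
    transfer ϕ g = ∏ i ∈ Finset.range H.index, ϕ ⟨(t ^ i)⁻¹ * g * t ^ i, hH.conj_mem' g hg _⟩ := by
  let := H.fintypeQuotientOfFiniteIndex
  let T : H.LeftTransversal := default
  rw [transfer_def ϕ T, leftTransversals.diff]
  have hfix : ∀ q : G ⧸ H, g⁻¹ • q = q := fun q => by
    induction q using QuotientGroup.induction_on with
    | H a => rw [MulAction.Quotient.smul_mk, smul_eq_mul, QuotientGroup.mk_mul,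
        (QuotientGroup.eq_one_iff _).mpr (inv_mem hg), one_mul]
  have hbij : Function.Bijective fun i : Fin H.index => ((t ^ (i : ℕ) : G) : G ⧸ H) := by
    refine (Fintype.bijective_iff_injective_and_card _).mpr ⟨fun i j hij => ?_, ?_⟩
    · simp only [QuotientGroup.mk_pow] at hij
      exact Fin.ext (pow_injOn_Iio_orderOf (by simp [ht]) (by simp [ht]) hij)
    · rw [Fintype.card_fin, index_eq_card, Nat.card_eq_fintype_card]
  rw [Finset.prod_range]
  refine (Fintype.prod_bijective _ hbij _ _ fun i => ?_).symm
  simp only [smul_apply_eq_smul_apply_inv_smul, hfix, smul_eq_mul, ← mul_assoc]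
  exact map_conj_eq_of_mk_eq ϕ hg (T.2.quotientGroupMk_leftQuotientEquiv _).symm

theorem transfer_eq_pow_of_conj_eq_mul (hodd : Odd H.index) {t g c : G}
    (ht : orderOf (t : G ⧸ H) = H.index) (hg : g ∈ H) (hconj : t⁻¹ * g * t = g * c)
    (htc : Commute t c) (hc : c ∈ H) (hcn : c ^ H.index = 1) :
    transfer ϕ g = ϕ ⟨g ^ H.index, pow_mem hg _⟩ := by
  obtain ⟨k, hk⟩ := hodd
  have hterm (i : ℕ) : (⟨(t ^ i)⁻¹ * g * t ^ i, hH.conj_mem' g hg _⟩ : H) =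
      ⟨g, hg⟩ * ⟨c, hc⟩ ^ i := Subtype.ext (by simpa using conj_pow_eq_mul_pow hconj htc i)
  have hsum : ∑ i ∈ Finset.range H.index, i = H.index * k := by
    have := Finset.sum_range_id_mul_two H.index
    rw [hk] at this ⊢
    simp only [add_tsub_cancel_right] at this
    linarith
  have hcn' : ϕ ⟨c, hc⟩ ^ H.index = 1 := by
    rw [← map_pow, ← map_one ϕ]
    exact congrArg ϕ (Subtype.ext (by simpa using hcn))
  rw [transfer_eq_prod_range_of_mem ϕ ht hg]
  simp only [hterm, map_mul, map_pow, Finset.prod_mul_distrib, Finset.prod_const,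
    Finset.card_range]
  rw [Finset.prod_pow_eq_pow_sum, hsum, pow_mul, hcn', one_pow, mul_one, ← map_pow]
  rfl

theorem transfer_eq_pow_of_pow_mem_center {g : G} (hg : orderOf (g : G ⧸ H) = H.index)
    (hgc : g ^ H.index ∈ center G) :
    transfer ϕ g = ϕ ⟨g ^ H.index, H.pow_index_mem g⟩ := by
  refine transfer_eq_pow ϕ g fun k g₀ hk => ?_
  have : (g : G ⧸ H) ^ k = 1 := by
    rw [← QuotientGroup.mk_pow, QuotientGroup.eq_one_iff]
    simpa [mul_assoc] using hH.conj_mem _ hk g₀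
  obtain ⟨m, rfl⟩ := hg ▸ orderOf_dvd_of_pow_eq_one this
  rw [pow_mul, mul_assoc, ← mem_center_iff.mp (pow_mem hgc m) g₀, inv_mul_cancel_left]

theorem transfer_eq_pow_of_index_prime (hp : H.index.Prime) (hodd : Odd H.index) {t g c : G}
    (hgt : g ∈ H → t ∉ H) (hconj : t⁻¹ * g * t = g * c) (htc : Commute t c) (hc : c ∈ H)
    (hcn : c ^ H.index = 1) (hgc : g ^ H.index ∈ center G) :
    transfer ϕ g = ϕ ⟨g ^ H.index, H.pow_index_mem g⟩ := by
  by_cases hg : g ∈ H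
  · exact transfer_eq_pow_of_conj_eq_mul ϕ hodd (orderOf_mk_eq_index_of_notMem hp (hgt hg)) hg
      hconj htc hc hcn
  · exact transfer_eq_pow_of_pow_mem_center ϕ (orderOf_mk_eq_index_of_notMem hp hg) hgc

end MonoidHom

theorem extraspecial_exponent_p_squared_transfer_kernels_general
    (p : ℕ) (hp : p.Prime) (hodd : Odd p)
    (G : Type*) [Group G] [Finite G] (hcard : Nat.card G = p ^ 3)
    (x y : G) (hgen : Subgroup.closure {x, y} = ⊤)
    (hxp : x ^ p = y⁻¹ * x⁻¹ * y * x) (hyp : y ^ p = 1)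
    (hcen : y⁻¹ * x⁻¹ * y * x ∈ Subgroup.center G)
    (hord : orderOf (y⁻¹ * x⁻¹ * y * x) = p) :
    ∀ M : Subgroup G, IsCoatom M →
      (MonoidHom.transfer (Abelianization.of : ↥M →* Abelianization ↥M)).ker =
        Subgroup.closure (insert y (commutator G : Set G)) := by
  intro M hM
  set z := y⁻¹ * x⁻¹ * y * x with hz
  have := Fact.mk hp
  have hG : IsPGroup p G := IsPGroup.of_card hcard
  have := hG.normal_of_isCoatom hM
  have hidx : M.index = p := hG.index_eq_of_isCoatom hM
  have := IsPGroup.isMulCommutative_of_card_eq_prime_sq (card_eq_prime_pow_of_isCoatom hcard hM)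
  have hzG : z ∈ commutator G := by
    rw [show z = ⁅y⁻¹, x⁻¹⁆ by rw [hz, commutatorElement_def, inv_inv, inv_inv]]
    exact commutator_mem_commutator (mem_top _) (mem_top _)
  have hzM : z ∈ M := hG.commutator_le_of_isCoatom hM hzG
  have hzp : z ^ p = 1 := hord ▸ pow_orderOf_eq_one z
  have hxy : x ∈ M → y ∉ M := fun hx hy => hM.1 <| top_le_iff.mp <| hgen ▸ (closure_le M).mpr <|
    Set.insert_subset_iff.mpr ⟨hx, Set.singleton_subset_iff.mpr hy⟩
  subst hidx
  have hVy : MonoidHom.transfer (Abelianization.of : M →* _) y = 1 := by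
    rw [MonoidHom.transfer_eq_pow_of_index_prime _ hp hodd (t := x) (c := z)
      (fun hy hx => hxy hx hy) (by rw [hz]; group) (mem_center_iff.mp hcen x) hzM hzp
      (by rw [hyp]; exact one_mem _)]
    exact (congrArg _ (Subtype.ext hyp)).trans (map_one _)
  have hVx : MonoidHom.transfer (Abelianization.of : M →* _) x ≠ 1 := by
    rw [MonoidHom.transfer_eq_pow_of_index_prime _ hp hodd (t := y) (c := z⁻¹) hxy
      (by rw [hz]; group) (mem_center_iff.mp (inv_mem hcen) y) (inv_mem hzM)
      (by rw [inv_pow, hzp, inv_one]) (by rwa [hxp])]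
    refine (map_ne_one_iff _ Abelianization.of_injective).mpr fun h => ?_
    exact hp.ne_one (hord ▸ orderOf_eq_one_iff.mpr (hxp ▸ congrArg Subtype.val h))
  exact MonoidHom.ker_eq_closure_insert_commutator _ hgen hp (hxp ▸ hzG) hVy hVx

/-- Let `p ≥ 3` be odd prime and `G` the extraspecial group of order `p³` and
exponent `p²`, i.e. `G = ⟨x,y : xᵖ = [y,x], yᵖ = 1, [y,x] central of order p⟩`.
Then for each maximal subgroup `M` of `G`, the kernel of the transfer
`V : G/[G,G] → M/[M,M]` equals `M₁/[G,G]` where `M₁ = ⟨y,[G,G]⟩`; in particular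
all `p+1` transfer kernels coincide. -/
theorem extraspecial_exponent_p_squared_transfer_kernels
    (p : ℕ) (hp : p.Prime) (hodd : Odd p) (h3 : 3 ≤ p)
    (G : Type*) [Group G] [Finite G] (hcard : Nat.card G = p ^ 3)
    (x y : G) (hgen : Subgroup.closure {x, y} = ⊤)
    (hxp : x ^ p = y⁻¹ * x⁻¹ * y * x) (hyp : y ^ p = 1)
    (hcen : y⁻¹ * x⁻¹ * y * x ∈ Subgroup.center G)
    (hord : orderOf (y⁻¹ * x⁻¹ * y * x) = p) :
    ∀ M : Subgroup G, IsCoatom M →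
      (MonoidHom.transfer (Abelianization.of : ↥M →* Abelianization ↥M)).ker =
        Subgroup.closure (insert y (commutator G : Set G)) :=
  extraspecial_exponent_p_squared_transfer_kernels_general p hp hodd G hcard x y hgen hxp hyp hcen
    hord
end

section
/- Let p ≥ 3 be odd and G a metabelian p-group of maximal class of order p^m with m ≥ 4, with maximal subgroups M₁,…,M_{p+1} ordered so that M₁ = χ₂(G) is the two-step centralizer. Then for every i with 2 ≤ i ≤ p+1, the transfer V_i : G/[G,G] → M_i/[M_i,M_i] is the trivial homomorphism, i.e., Ker(V_i) = G/[G,G]. -/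
/-!
Write `χ₂` for the two-step centralizer and `γ₂ = [G, G]`. Maximal class forces `|G : γ₂| = p²`
with `G/γ₂` not cyclic, hence of exponent `p`, and `|γᵢ : γᵢ₊₁| = p` for `2 ≤ i < m`. Commutation
with a fixed `w ∈ γ₂ \ γ₃` is a homomorphism `G → γ₃/γ₄` with kernel `χ₂`, so `χ₂` has index `p`.
If `s ∉ χ₂` then `sᵖ ∈ γ₃`: otherwise `sᵖ` would generate `γ₂` modulo `γ₃`, and `s`, commuting
with `sᵖ`, would centralize `γ₂/γ₄`.

Let `M ≠ χ₂` be maximal, so `G = χ₂ M`. The three subgroups lemma and `[γ₂, γ₂] = 1` give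
`[γᵢ, χ₂] ≤ γᵢ₊₂`, hence `[γᵢ, G] ≤ [M, M] γᵢ₊₂` for `i ≥ 2`, and so `γ₃ ≤ [M, M]`. For
`g ∉ M ∪ χ₂` every power of `g` lying in `M` is a power of `gᵖ ∈ γ₃`, so every factor of the
transfer of `g` vanishes in `M/[M, M]`. As `p` is odd, the elements outside `M ∪ χ₂` generate `G`.
-/

open Subgroup
open scoped commutatorElement

section

variable {G : Type*} [Group G]

theorem le_of_forall_le_sup_succ {α : Type*} [SemilatticeSup α] [OrderBot α] {f : ℕ → α}
    {x : α} {a k : ℕ} (hf : Antitone f) (h : ∀ i, a ≤ i → f i ≤ x ⊔ f (i + 1)) (hk : f k = ⊥) :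
    f a ≤ x := by
  have key : ∀ j, f a ≤ x ⊔ f (a + j) := by
    intro j
    induction j with
    | zero => exact le_sup_right
    | succ j ih => exact ih.trans (sup_le le_sup_left (h _ (Nat.le_add_right a j)))
  exact (key k).trans (sup_le le_rfl ((hf (Nat.le_add_left k a)).trans (hk.trans_le bot_le)))

namespace QuotientGroup

theorem commute_mk_iff {N : Subgroup G} [N.Normal] {g h : G} :
    Commute (g : G ⧸ N) (h : G ⧸ N) ↔ ⁅g, h⁆ ∈ N := by
  rw [← commutatorElement_eq_one_iff_commute, ← eq_one_iff]
  exact Iff.of_eq (congrArg (· = 1) (map_commutatorElement (mk' N) g h).symm)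

end QuotientGroup

namespace Subgroup

theorem card_mul_relIndex {H K : Subgroup G} (h : H ≤ K) :
    Nat.card H * H.relIndex K = Nat.card K := by
  simpa [relIndex_bot_left] using relIndex_mul_relIndex ⊥ H K bot_le h

theorem eq_of_relIndex_prime {H L K : Subgroup G} (hHL : H ≤ L) (hLK : L ≤ K) (hLH : ¬L ≤ H)
    (hp : (H.relIndex K).Prime) : L = K := by
  rw [← relIndex_mul_relIndex H L K hHL hLK] at hp
  rcases Nat.prime_mul_iff.1 hp with ⟨-, h⟩ | ⟨-, h⟩
  · exact le_antisymm hLK (relIndex_eq_one.1 h)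
  · exact absurd (relIndex_eq_one.1 h) hLH

theorem isCoatom_of_index_prime {H : Subgroup G} (hp : H.index.Prime) : IsCoatom H := by
  refine ⟨fun h => hp.one_lt.ne' (index_eq_one.2 h), fun K hK => ?_⟩
  rw [← relIndex_mul_index hK.le] at hp
  rcases Nat.prime_mul_iff.1 hp with ⟨-, h⟩ | ⟨-, h⟩
  · exact index_eq_one.1 h
  · exact absurd (relIndex_eq_one.1 h) hK.not_ge

theorem commutator_le_of_isCoatom {M : Subgroup G} [M.Normal] (hM : IsCoatom M) :
    _root_.commutator G ≤ M := by
  obtain ⟨x, -, hx⟩ := SetLike.exists_of_lt hM.lt_top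
  have hgen : ∀ g : G, (g : G ⧸ M) ∈ zpowers (x : G ⧸ M) := by
    have : M < (zpowers (x : G ⧸ M)).comap (QuotientGroup.mk' M) :=
      lt_of_le_of_ne (fun y hy => by simp [(QuotientGroup.eq_one_iff y).2 hy])
        (fun h => hx (h ▸ mem_zpowers (x : G ⧸ M)))
    exact fun g => (eq_top_iff' _).1 (hM.lt_iff.1 this) g
  rw [_root_.commutator_def, commutator_le]
  intro a _ b _
  obtain ⟨i, hi⟩ := mem_zpowers_iff.1 (hgen a)
  obtain ⟨j, hj⟩ := mem_zpowers_iff.1 (hgen b)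
  rw [← QuotientGroup.commute_mk_iff, ← hi, ← hj]
  exact Commute.zpow_zpow_self _ i j

theorem commutator_commutator_le_of_rotate {H₁ H₂ H₃ N : Subgroup G} [N.Normal]
    (h1 : ⁅⁅H₂, H₃⁆, H₁⁆ ≤ N) (h2 : ⁅⁅H₃, H₁⁆, H₂⁆ ≤ N) : ⁅⁅H₁, H₂⁆, H₃⁆ ≤ N := by
  have hmap : ∀ A B C : Subgroup G, ⁅⁅A, B⁆, C⁆ ≤ N ↔
      ⁅⁅A.map (QuotientGroup.mk' N), B.map (QuotientGroup.mk' N)⁆,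
        C.map (QuotientGroup.mk' N)⁆ = ⊥ := by
    intro A B C
    rw [← map_commutator, ← map_commutator, map_eq_bot_iff, QuotientGroup.ker_mk']
  rw [hmap] at h1 h2 ⊢
  exact commutator_commutator_eq_bot_of_rotate h1 h2

def centralizerMod (N : Subgroup G) [N.Normal] (s : Set G) : Subgroup G :=
  (centralizer (QuotientGroup.mk' N '' s)).comap (QuotientGroup.mk' N)

theorem mem_centralizerMod {N : Subgroup G} [N.Normal] {s : Set G} {g : G} :
    g ∈ centralizerMod N s ↔ ∀ h ∈ s, ⁅g, h⁆ ∈ N := by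
  simp only [centralizerMod, mem_comap, mem_centralizer_iff, Set.forall_mem_image]
  exact forall₂_congr fun h _ => (Commute.symm_iff).trans QuotientGroup.commute_mk_iff

theorem closure_compl_union_eq_top {H K : Subgroup G} (hH : H ≠ ⊤) (hK : K ≠ ⊤)
    (hsq : ∀ g ∉ H, g * g ∉ H) : closure ((H : Set G) ∪ K)ᶜ = ⊤ := by
  set L := closure ((H : Set G) ∪ K)ᶜ
  have hL : ∀ g, g ∉ H → g ∉ K → g ∈ L := fun g hgH hgK =>
    subset_closure (by simp [hgH, hgK])
  obtain ⟨y, hyH, hyK⟩ : ∃ y, y ∉ H ∧ y ∉ K := by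
    by_contra! hHK
    obtain ⟨a, -, ha⟩ := SetLike.exists_of_lt hH.lt_top
    obtain ⟨b, -, hb⟩ := SetLike.exists_of_lt hK.lt_top
    have hbH : b ∈ H := by_contra fun hbH => hb (hHK b hbH)
    have habH : a * b ∉ H := fun hab => ha (by simpa using H.mul_mem hab (H.inv_mem hbH))
    exact hb (by simpa using K.mul_mem (K.inv_mem (hHK a ha)) (hHK _ habH))
  have hLH : ∀ x ∈ H, x ∈ L := by
    intro x hx
    have hxy : x * y ∉ H := fun hxy => hyH (by simpa using H.mul_mem (H.inv_mem hx) hxy)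
    by_cases hxyK : x * y ∈ K
    · have hxyy : x * y * y ∈ L := by
        refine hL _ (fun hxyy => hsq y hyH ?_) (fun hxyy => hyK ?_)
        · simpa [mul_assoc] using H.mul_mem (H.inv_mem hx) hxyy
        · simpa [mul_assoc] using K.mul_mem (K.inv_mem hxyK) hxyy
      simpa using L.mul_mem hxyy (L.inv_mem (L.mul_mem (hL y hyH hyK) (hL y hyH hyK)))
    · simpa using L.mul_mem (hL _ hxy hxyK) (L.inv_mem (hL y hyH hyK))
  refine eq_top_iff.2 fun x _ => ?_
  by_cases hxH : x ∈ H
  · exact hLH x hxH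
  by_cases hxK : x ∈ K
  · have hxy : x * y ∈ L := by
      by_cases hxyH : x * y ∈ H
      · exact hLH _ hxyH
      · exact hL _ hxyH fun hxyK => hyK (by simpa using K.mul_mem (K.inv_mem hxK) hxyK)
    simpa using L.mul_mem hxy (L.inv_mem (hL y hyH hyK))
  · exact hL x hxH hxK

end Subgroup

theorem IsPGroup.dvd_of_pow_mem {p : ℕ} [Fact p.Prime] (hG : IsPGroup p G) {H : Subgroup G}
    {g : G} {k : ℕ} (hg : g ∉ H) (hk : g ^ k ∈ H) : p ∣ k := by
  by_contra hpk
  obtain ⟨j, hj⟩ := exists_pow_eq_self_of_coprime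
    (hG.orderOf_coprime ((Nat.Prime.coprime_iff_not_dvd Fact.out).2 hpk) g).symm
  exact hg (hj ▸ pow_mem hk j)

theorem IsPGroup.mul_self_notMem {p : ℕ} [Fact p.Prime] (hG : IsPGroup p G) (hp : p ≠ 2)
    {H : Subgroup G} {g : G} (hg : g ∉ H) : g * g ∉ H := fun hgg =>
  hp ((Nat.prime_dvd_prime_iff_eq Fact.out Nat.prime_two).1
    (hG.dvd_of_pow_mem hg (k := 2) (by rwa [pow_two])))

theorem MonoidHom.transfer_eq_one_of_pow_mem_commutator {H : Subgroup G} [H.Normal]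
    [H.FiniteIndex] {g : G} (hg : ∀ k : ℕ, g ^ k ∈ H → g ^ k ∈ ⁅H, H⁆) :
    transfer (Abelianization.of : H →* Abelianization H) g = 1 := by
  classical
  have := Fintype.ofFinite (Quotient (MulAction.orbitRel (zpowers g) (G ⧸ H)))
  rw [transfer_eq_prod_quotient_orbitRel_zpowers_quot]
  refine Finset.prod_eq_one fun q _ => (QuotientGroup.eq_one_iff _).2 ?_
  rw [← mem_map_iff_mem H.subtype_injective, map_subtype_commutator]
  have hgk := (inferInstance : H.Normal).conj_mem _
    (QuotientGroup.out_conj_pow_minimalPeriod_mem H g q.out) q.out.out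
  simp only [mul_assoc, mul_inv_cancel_left, mul_inv_cancel, mul_one] at hgk
  simpa [mul_assoc] using (commutator_normal H H).conj_mem _ (hg _ hgk) q.out.out⁻¹

theorem Nat.eq_sub_of_forall_succ_lt {e : ℕ → ℕ} {n : ℕ}
    (h : ∀ i, 1 ≤ i → i ≤ n → e (i + 1) < e i) (h1 : e 1 ≤ n) {i : ℕ} (hi : 1 ≤ i)
    (hin : i ≤ n + 1) : e i = n + 1 - i := by
  have upper : ∀ i, 1 ≤ i → i ≤ n + 1 → e i + i ≤ n + 1 := by
    intro i hi
    induction i, hi using Nat.le_induction with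
    | base => intro; omega
    | succ i hi ih => intro hin; have := h i hi (by omega); have := ih (by omega); omega
  have lower : ∀ j, j ≤ n → j ≤ e (n + 1 - j) := by
    intro j
    induction j with
    | zero => intro; omega
    | succ j ih =>
      intro hj
      have := h (n - j) (by omega) (by omega)
      rw [show n - j + 1 = n + 1 - j by omega] at this
      rw [show n + 1 - (j + 1) = n - j by omega]
      have := ih (by omega); omega
  have := upper i hi hin
  have := lower (n + 1 - i) (by omega)
  rw [show n + 1 - (n + 1 - i) = i by omega] at this
  omega

theorem pow_eq_one_of_card_eq_sq_of_not_isCyclic {Q : Type*} [Group Q] [Finite Q] {p : ℕ}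
    [hp : Fact p.Prime] (hQ : Nat.card Q = p ^ 2) (hnc : ¬IsCyclic Q) (x : Q) : x ^ p = 1 := by
  obtain ⟨k, hk, hx⟩ := (Nat.dvd_prime_pow hp.out).1 (hQ ▸ orderOf_dvd_natCard x)
  have hk2 : k ≠ 2 := fun h2 => hnc (isCyclic_of_orderOf_eq_card x (by rw [hx, h2, hQ]))
  rw [← orderOf_dvd_iff_pow_eq_one, hx]
  exact (pow_dvd_pow p (by omega : k ≤ 1)).trans (pow_one p).dvd

section LowerCentralSeries

-- `γ i` is the paper's `γ_{i+1}(G)`: `γ 0 = G` and `γ 1 = [G, G]`.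
local notation "γ" => Subgroup.lowerCentralSeries (⊤ : Subgroup G)

theorem lowerCentralSeries_succ_lt {n i : ℕ} (hbot : γ (n + 1) = ⊥) (hne : γ n ≠ ⊥) (hi : i ≤ n) :
    γ (i + 1) < γ i := by
  refine (Subgroup.lowerCentralSeries_antitone ⊤ i.le_succ).lt_of_ne fun heq => hne ?_
  have hstable : ∀ j, γ (i + j) = γ i := by
    intro j
    induction j with
    | zero => rfl
    | succ j ih =>
      rw [← add_assoc, Subgroup.lowerCentralSeries_succ, ih, ← Subgroup.lowerCentralSeries_succ,
        heq]
  have h1 := hstable (n - i)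
  have h2 := hstable (n + 1 - i)
  rw [Nat.add_sub_cancel' hi] at h1
  rw [Nat.add_sub_cancel' (by omega)] at h2
  rw [h1, ← h2, hbot]

theorem commutatorElement_mem_lowerCentralSeries_succ {i : ℕ} {x : G} (hx : x ∈ γ i) (g : G) :
    ⁅g, x⁆ ∈ γ (i + 1) := by
  rw [← commutatorElement_inv]
  exact inv_mem (commutator_mem_commutator hx (mem_top g))

theorem commute_mk_of_mem_lowerCentralSeries {i : ℕ} {x : G} (hx : x ∈ γ i) (g : G) :
    Commute (x : G ⧸ γ (i + 1)) g :=
  QuotientGroup.commute_mk_iff.2 (commutator_mem_commutator hx (mem_top g))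

theorem lowerCentralSeries_one_le_two_of_isCyclic [IsCyclic (G ⧸ γ 1)] : γ 1 ≤ γ 2 := by
  let f : G ⧸ γ 2 →* G ⧸ γ 1 :=
    QuotientGroup.map _ _ (MonoidHom.id G)
      (Subgroup.lowerCentralSeries_antitone ⊤ (by norm_num : 1 ≤ 2))
  have hf : f.ker ≤ center (G ⧸ γ 2) := by
    intro x hx
    obtain ⟨x, rfl⟩ := QuotientGroup.mk_surjective x
    have hx1 : x ∈ γ 1 := (QuotientGroup.eq_one_iff x).1 hx
    refine mem_center_iff.2 fun y => ?_
    obtain ⟨y, rfl⟩ := QuotientGroup.mk_surjective y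
    exact (commute_mk_of_mem_lowerCentralSeries hx1 y).symm.eq
  rw [top_lowerCentralSeries_one, _root_.commutator_def, commutator_le]
  exact fun a _ b _ => QuotientGroup.commute_mk_iff.1
    ((f.isMulCommutative_of_isCyclic_of_ker_le_center hf).is_comm.comm _ _)

theorem commutator_lowerCentralSeries_le_of_metabelian (hmet : ⁅γ 1, γ 1⁆ = ⊥) {C : Subgroup G}
    {k : ℕ} (hC : ⁅γ 1, C⁆ ≤ γ (1 + k)) {i : ℕ} (hi : 1 ≤ i) : ⁅γ i, C⁆ ≤ γ (i + k) := by
  induction i, hi using Nat.le_induction with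
  | base => exact hC
  | succ i hi ih =>
    rw [Subgroup.lowerCentralSeries_succ, add_right_comm, Subgroup.lowerCentralSeries_succ]
    refine commutator_commutator_le_of_rotate ?_ ?_
    · calc ⁅⁅⊤, C⁆, γ i⁆ ≤ ⁅γ 1, γ 1⁆ :=
            commutator_mono (commutator_mono le_rfl le_top)
              (Subgroup.lowerCentralSeries_antitone ⊤ hi)
        _ = ⊥ := hmet
        _ ≤ _ := bot_le
    · exact commutator_mono (commutator_comm C (γ i) ▸ ih) le_rfl

theorem lowerCentralSeries_two_le_commutator {C M : Subgroup G} [M.Normal] {k : ℕ}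
    (hCM : C ⊔ M = ⊤) (hM : γ 1 ≤ M) (hC : ∀ i, 1 ≤ i → ⁅γ i, C⁆ ≤ γ (i + 2)) (hbot : γ k = ⊥) :
    γ 2 ≤ ⁅M, M⁆ := by
  refine le_of_forall_le_sup_succ (Subgroup.lowerCentralSeries_antitone ⊤) (fun i hi => ?_) hbot
  obtain ⟨i, rfl⟩ : ∃ j, i = j + 1 := ⟨i - 1, by omega⟩
  rw [Subgroup.lowerCentralSeries_succ, commutator_le]
  intro u hu g _
  obtain ⟨t, ht, x, hx, rfl⟩ := mem_sup_of_normal_right.1 (hCM ▸ mem_top g)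
  rw [commutatorElement_mul_right_eq_mul_conj, mul_assoc, mul_assoc, ← mul_assoc t]
  have hu1 : u ∈ M := hM (Subgroup.lowerCentralSeries_antitone ⊤ (by omega) hu)
  exact mul_mem (mem_sup_right (hC i (by omega) (commutator_mem_commutator hu ht)))
    (mem_sup_left ((commutator_normal M M).conj_mem _ (commutator_mem_commutator hu1 hx) t))

def commutatorRightHom {i : ℕ} (x : G) (hx : x ∈ γ i) : G →* G ⧸ γ (i + 2) where
  toFun g := (⁅g, x⁆ : G)
  map_one' := by rw [commutatorElement_one_left]; rfl
  map_mul' a b := by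
    have hb := commutatorElement_mem_lowerCentralSeries_succ hx b
    rw [commutatorElement_mul_left_eq_conj_mul, QuotientGroup.mk_mul, QuotientGroup.mk_mul,
      QuotientGroup.mk_mul, QuotientGroup.mk_inv,
      (commute_mk_of_mem_lowerCentralSeries hb a).symm.mul_inv_cancel]
    exact (commute_mk_of_mem_lowerCentralSeries hb _).eq

theorem mem_ker_commutatorRightHom {i : ℕ} {x : G} (hx : x ∈ γ i) {g : G} :
    g ∈ (commutatorRightHom x hx).ker ↔ ⁅g, x⁆ ∈ γ (i + 2) :=
  QuotientGroup.eq_one_iff _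

variable (G) in
def twoStepCentralizer : Subgroup G :=
  centralizerMod (γ 3) (γ 1)

theorem mem_twoStepCentralizer {g : G} : g ∈ twoStepCentralizer G ↔ ∀ u ∈ γ 1, ⁅g, u⁆ ∈ γ 3 :=
  mem_centralizerMod

theorem coe_twoStepCentralizer :
    (twoStepCentralizer G : Set G) = {g | ∀ u ∈ γ 1, g⁻¹ * u⁻¹ * g * u ∈ γ 3} := by
  ext g
  rw [SetLike.mem_coe, ← inv_mem_iff, mem_twoStepCentralizer]
  constructor <;> intro h u hu <;> simpa [commutatorElement_def] using h u⁻¹ (inv_mem hu)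

theorem commutator_lowerCentralSeries_one_twoStepCentralizer_le :
    ⁅γ 1, twoStepCentralizer G⁆ ≤ γ 3 := by
  rw [commutator_comm, commutator_le]
  exact fun g hg u hu => mem_twoStepCentralizer.1 hg u hu

theorem mem_twoStepCentralizer_of_le_zpowers_sup {g u : G} (hu : γ 1 ≤ zpowers u ⊔ γ 2)
    (hgu : ⁅u, g⁆ ∈ γ 3) : g ∈ twoStepCentralizer G := by
  have hle : γ 1 ≤ centralizerMod (γ 3) {g} := by
    refine hu.trans (sup_le (zpowers_le.2 ?_) fun v hv => ?_) <;>
      simp only [mem_centralizerMod, Set.mem_singleton_iff, forall_eq]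
    · exact hgu
    · exact commutator_mem_commutator hv (mem_top g)
  refine mem_twoStepCentralizer.2 fun v hv => ?_
  rw [← commutatorElement_inv]
  exact inv_mem (mem_centralizerMod.1 (hle hv) g rfl)

variable (G) in
structure IsMaximalClass (p n : ℕ) : Prop where
  card_eq : Nat.card G = p ^ (n + 2)
  lowerCentralSeries_succ_eq_bot : γ (n + 1) = ⊥
  lowerCentralSeries_ne_bot : γ n ≠ ⊥

namespace IsMaximalClass

variable {p n : ℕ}

theorem lowerCentralSeries_succ_lt (hG : IsMaximalClass G p n) {i : ℕ} (hi : i ≤ n) :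
    γ (i + 1) < γ i :=
  _root_.lowerCentralSeries_succ_lt hG.lowerCentralSeries_succ_eq_bot
    hG.lowerCentralSeries_ne_bot hi

theorem not_isCyclic_quotient (hG : IsMaximalClass G p n) (hn : 1 ≤ n) : ¬IsCyclic (G ⧸ γ 1) :=
  fun _ => (hG.lowerCentralSeries_succ_lt hn).not_ge lowerCentralSeries_one_le_two_of_isCyclic

theorem card_lowerCentralSeries [hp : Fact p.Prime] [Finite G] (hG : IsMaximalClass G p n)
    (hn : 1 ≤ n) {i : ℕ} (hi : 1 ≤ i) (hin : i ≤ n + 1) : Nat.card (γ i) = p ^ (n + 1 - i) := by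
  choose e he using fun i =>
    (Nat.dvd_prime_pow hp.out).1 ((card_subgroup_dvd_card (γ i)).trans hG.card_eq.dvd)
  rw [(he i).2]
  congr 1
  refine Nat.eq_sub_of_forall_succ_lt (fun j _ hj => ?_) ?_ hi hin
  · have hlt : Nat.card (γ (j + 1)) < Nat.card (γ j) := Set.Finite.card_lt_card (Set.toFinite _)
      (SetLike.coe_ssubset_coe.2 (hG.lowerCentralSeries_succ_lt hj))
    rwa [(he _).2, (he _).2, Nat.pow_lt_pow_iff_right hp.out.one_lt] at hlt
  · by_contra! h1
    refine hG.not_isCyclic_quotient hn (isCyclic_of_card_dvd_prime (p := p) ?_)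
    refine Nat.dvd_of_mul_dvd_mul_left (pow_pos hp.out.pos (n + 1)) ?_
    calc p ^ (n + 1) * (γ 1).index ∣ p ^ e 1 * (γ 1).index := mul_dvd_mul_right (pow_dvd_pow p h1) _
      _ = p ^ (n + 1) * p := by rw [← (he 1).2, card_mul_index, hG.card_eq, pow_succ]

theorem relIndex_lowerCentralSeries_succ [hp : Fact p.Prime] [Finite G] (hG : IsMaximalClass G p n)
    (hn : 1 ≤ n) {i : ℕ} (hi : 1 ≤ i) (hin : i ≤ n) : (γ (i + 1)).relIndex (γ i) = p := by
  have h := card_mul_relIndex (Subgroup.lowerCentralSeries_antitone (⊤ : Subgroup G) i.le_succ)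
  rw [hG.card_lowerCentralSeries hn (by omega) (by omega),
    hG.card_lowerCentralSeries hn hi (by omega), show n + 1 - i = n + 1 - (i + 1) + 1 by omega,
    pow_succ] at h
  exact Nat.eq_of_mul_eq_mul_left (pow_pos hp.out.pos _) h

theorem index_lowerCentralSeries_one [hp : Fact p.Prime] [Finite G] (hG : IsMaximalClass G p n)
    (hn : 1 ≤ n) : (γ 1).index = p ^ 2 := by
  have h := card_mul_index (γ 1)
  rw [hG.card_lowerCentralSeries hn le_rfl (by omega), hG.card_eq, Nat.add_sub_cancel, pow_add] at h
  exact Nat.eq_of_mul_eq_mul_left (pow_pos hp.out.pos _) h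

theorem pow_mem_lowerCentralSeries_one [Fact p.Prime] [Finite G] (hG : IsMaximalClass G p n)
    (hn : 1 ≤ n) (g : G) : g ^ p ∈ γ 1 := by
  rw [← QuotientGroup.eq_one_iff, QuotientGroup.mk_pow]
  exact pow_eq_one_of_card_eq_sq_of_not_isCyclic (hG.index_lowerCentralSeries_one hn)
    (hG.not_isCyclic_quotient hn) _

theorem lowerCentralSeries_le_zpowers_sup [hp : Fact p.Prime] [Finite G]
    (hG : IsMaximalClass G p n) (hn : 1 ≤ n) {i : ℕ} (hi : 1 ≤ i) (hin : i ≤ n) {u : G}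
    (hu : u ∈ γ i) (hu' : u ∉ γ (i + 1)) :
    γ i ≤ zpowers u ⊔ γ (i + 1) := by
  refine (eq_of_relIndex_prime le_sup_right ?_ ?_ ?_).ge
  · exact sup_le (zpowers_le.2 hu) (Subgroup.lowerCentralSeries_antitone ⊤ i.le_succ)
  · exact fun h => hu' (h (mem_sup_left (mem_zpowers u)))
  · rw [hG.relIndex_lowerCentralSeries_succ hn hi hin]
    exact hp.out

theorem twoStepCentralizer_ne_top (hG : IsMaximalClass G p n) (hn : 2 ≤ n) :
    twoStepCentralizer G ≠ ⊤ := by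
  intro h
  have hle := commutator_lowerCentralSeries_one_twoStepCentralizer_le (G := G)
  rw [h] at hle
  exact (hG.lowerCentralSeries_succ_lt hn).not_ge hle

theorem index_twoStepCentralizer [hp : Fact p.Prime] [Finite G] (hG : IsMaximalClass G p n)
    (hn : 2 ≤ n) : (twoStepCentralizer G).index = p := by
  obtain ⟨w, hw, hw'⟩ := SetLike.exists_of_lt (hG.lowerCentralSeries_succ_lt (i := 1) (by omega))
  have hker : (commutatorRightHom w hw).ker = twoStepCentralizer G := by
    ext g
    rw [mem_ker_commutatorRightHom]
    refine ⟨fun h => ?_, fun h => mem_twoStepCentralizer.1 h w hw⟩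
    refine mem_twoStepCentralizer_of_le_zpowers_sup
      (hG.lowerCentralSeries_le_zpowers_sup (by omega) le_rfl (by omega) hw hw') ?_
    rw [← commutatorElement_inv]
    exact inv_mem h
  have hrange : (commutatorRightHom w hw).range ≤ (γ 2).map (QuotientGroup.mk' (γ 3)) := by
    rintro _ ⟨g, rfl⟩
    exact ⟨_, commutatorElement_mem_lowerCentralSeries_succ hw g, rfl⟩
  have hcard : Nat.card ((γ 2).map (QuotientGroup.mk' (γ 3))) = p := by
    have h := relIndex_ker (K := γ 2) (QuotientGroup.mk' (γ 3))
    rw [QuotientGroup.ker_mk'] at h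
    exact h.symm.trans (hG.relIndex_lowerCentralSeries_succ (i := 2) (by omega) (by omega) hn)
  have hdvd : (twoStepCentralizer G).index ∣ p := by
    rw [← hker, index_ker, ← hcard]
    exact card_dvd_of_le hrange
  refine ((Nat.dvd_prime hp.out).1 hdvd).resolve_left fun h => ?_
  exact hG.twoStepCentralizer_ne_top hn (index_eq_one.1 h)

theorem isCoatom_twoStepCentralizer [hp : Fact p.Prime] [Finite G] (hG : IsMaximalClass G p n)
    (hn : 2 ≤ n) : IsCoatom (twoStepCentralizer G) :=
  isCoatom_of_index_prime (by rw [hG.index_twoStepCentralizer hn]; exact hp.out)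

theorem pow_mem_of_notMem_twoStepCentralizer [Fact p.Prime] [Finite G] (hG : IsMaximalClass G p n)
    (hn : 1 ≤ n) {s : G} (hs : s ∉ twoStepCentralizer G) : s ^ p ∈ γ 2 := by
  by_contra h
  have hγ := hG.lowerCentralSeries_le_zpowers_sup hn le_rfl hn
    (hG.pow_mem_lowerCentralSeries_one hn s) h
  refine hs (mem_twoStepCentralizer_of_le_zpowers_sup hγ ?_)
  rw [((Commute.refl s).pow_left p).commutator_eq]
  exact one_mem _

theorem transfer_eq_one [Fact p.Prime] [Finite G] (hG : IsMaximalClass G p n)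
    (hmet : ⁅γ 1, γ 1⁆ = ⊥) (hn : 2 ≤ n) {M : Subgroup G} (hM : IsCoatom M)
    (hMχ : M ≠ twoStepCentralizer G) {g : G} (hgM : g ∉ M) (hgχ : g ∉ twoStepCentralizer G) :
    MonoidHom.transfer (Abelianization.of : M →* Abelianization M) g = 1 := by
  have hpG : IsPGroup p G := IsPGroup.of_card hG.card_eq
  have : Group.IsNilpotent G := hpG.isNilpotent
  have : M.Normal := Group.normalizerCondition_of_isNilpotent.normal_of_coatom M hM
  have hγM := lowerCentralSeries_two_le_commutator
    ((hG.isCoatom_twoStepCentralizer hn).sup_eq_top_of_ne hM hMχ.symm)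
    (commutator_le_of_isCoatom hM)
    (fun i hi => commutator_lowerCentralSeries_le_of_metabelian hmet
      commutator_lowerCentralSeries_one_twoStepCentralizer_le hi)
    hG.lowerCentralSeries_succ_eq_bot
  refine MonoidHom.transfer_eq_one_of_pow_mem_commutator fun k hk => ?_
  obtain ⟨c, rfl⟩ := hpG.dvd_of_pow_mem hgM hk
  rw [pow_mul]
  exact hγM (pow_mem (hG.pow_mem_of_notMem_twoStepCentralizer (by omega) hgχ) c)

end IsMaximalClass

end LowerCentralSeries

end

theorem maximal_class_odd_transfer_trivial_general
    (p : ℕ) (hp : p.Prime) (h3 : 3 ≤ p)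
    (m : ℕ) (hm : 4 ≤ m)
    (G : Type*) [Group G] [Finite G] (hcard : Nat.card G = p ^ m)
    (hclass : (⊤ : Subgroup G).lowerCentralSeries (m - 1) = ⊥ ∧ (⊤ : Subgroup G).lowerCentralSeries (m - 2) ≠ ⊥)
    (hmet : ∀ a ∈ commutator G, ∀ b ∈ commutator G, Commute a b) :
    ∀ M : Subgroup G, IsCoatom M →
      (M : Set G) ≠
        {g : G | ∀ u ∈ (⊤ : Subgroup G).lowerCentralSeries 1, g⁻¹ * u⁻¹ * g * u ∈ (⊤ : Subgroup G).lowerCentralSeries 3} →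
      (MonoidHom.transfer (Abelianization.of : ↥M →* Abelianization ↥M)).ker = ⊤ := by
  intro M hM hMχ
  have : Fact p.Prime := ⟨hp⟩
  obtain ⟨n, rfl⟩ : ∃ n, m = n + 2 := ⟨m - 2, by omega⟩
  have hG : IsMaximalClass G p n := ⟨hcard, hclass.1, hclass.2⟩
  have hMχ : M ≠ twoStepCentralizer G := fun h => hMχ (by rw [h, coe_twoStepCentralizer])
  have hmet' : ⁅commutator G, commutator G⁆ = ⊥ := commutator_eq_bot_iff_le_centralizer.2
    fun a ha => mem_centralizer_iff.2 fun b hb => hmet b hb a ha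
  have hsq : ∀ g ∉ M, g * g ∉ M := fun g =>
    (IsPGroup.of_card hcard).mul_self_notMem (by omega)
  rw [eq_top_iff, ← closure_compl_union_eq_top hM.1 (hG.twoStepCentralizer_ne_top (by omega)) hsq,
    closure_le]
  intro g hg
  simp only [Set.mem_compl_iff, Set.mem_union, SetLike.mem_coe, not_or] at hg
  exact hG.transfer_eq_one hmet' (by omega) hM hMχ hg.1 hg.2

/-- Let `p ≥ 3` be odd and `G` a metabelian `p`-group of maximal class of order
`p^m`, `m ≥ 4`. For every maximal subgroup `M` other than the two-step
centralizer `χ₂(G) = {g | [g,γ₂(G)] ≤ γ₄(G)}`, the transfer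
`V : G/[G,G] → M/[M,M]` is the trivial homomorphism (kernel `⊤` in `G`).
(Here `γ_j(G)` of the paper is `lowerCentralSeries G (j-1)`.) -/
theorem maximal_class_odd_transfer_trivial
    (p : ℕ) (hp : p.Prime) (hodd : Odd p) (h3 : 3 ≤ p)
    (m : ℕ) (hm : 4 ≤ m)
    (G : Type*) [Group G] [Finite G] (hcard : Nat.card G = p ^ m)
    (hclass : (⊤ : Subgroup G).lowerCentralSeries (m - 1) = ⊥ ∧ (⊤ : Subgroup G).lowerCentralSeries (m - 2) ≠ ⊥)
    (hmet : ∀ a ∈ commutator G, ∀ b ∈ commutator G, Commute a b) :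
    ∀ M : Subgroup G, IsCoatom M →
      (M : Set G) ≠
        {g : G | ∀ u ∈ (⊤ : Subgroup G).lowerCentralSeries 1, g⁻¹ * u⁻¹ * g * u ∈ (⊤ : Subgroup G).lowerCentralSeries 3} →
      (MonoidHom.transfer (Abelianization.of : ↥M →* Abelianization ↥M)).ker = ⊤ :=
  maximal_class_odd_transfer_trivial_general p hp h3 m hm G hcard hclass hmet
end

section
/- Let G be a group with elements u and h, and let N be a normal subgroup containing u such that the derived subgroup of N is trivial (N abelian). Then u^{1+h+h²} := u·(h⁻¹uh)·(h⁻²uh²) equals u³·[u,h]³·[[u,h],h] exactly (not just modulo a subgroup), provided [h⁻¹uh, u⁻¹] = 1, which holds since N is abelian and h⁻¹uh, u ∈ N. -/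
/-!
Write `c = [u,h]`, so that `h⁻¹uh = uc` and `h⁻²uh² = uc·(h⁻¹ch) = uc·c[c,h]`. The product
`u·uc·ucc[c,h]` collapses to `u³c³[c,h]` as soon as `u` commutes with `c`, and since
`c = u⁻¹·h⁻¹uh` this follows from `u` commuting with its conjugate `h⁻¹uh`.
-/

theorem mul_mul_mul_eq_pow_three_of_commute {G : Type*} [Group G] {u c : G}
    (hc : Commute u c) (d : G) :
    u * (u * c) * (u * c * (c * d)) = u ^ 3 * c ^ 3 * d :=
  calc u * (u * c) * (u * c * (c * d)) = u * u * (c * u) * c * c * d := by group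
    _ = u ^ 3 * c ^ 3 * d := by rw [← hc.eq]; simp only [pow_succ, pow_zero, one_mul, mul_assoc]

theorem trace_cube_eq_of_commute_conj {G : Type*} [Group G] {u h : G}
    (hconj : Commute u (h⁻¹ * u * h)) :
    u * (h⁻¹ * u * h) * (h⁻¹ * h⁻¹ * u * h * h) =
      u ^ 3 * (u⁻¹ * h⁻¹ * u * h) ^ 3 *
        ((u⁻¹ * h⁻¹ * u * h)⁻¹ * h⁻¹ * (u⁻¹ * h⁻¹ * u * h) * h) := by
  set c := u⁻¹ * h⁻¹ * u * h with hc_def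
  have hc : Commute u c := by
    have : c = u⁻¹ * (h⁻¹ * u * h) := by simp only [hc_def, mul_assoc]
    rw [this]
    exact (Commute.refl u).inv_right.mul_right hconj
  clear_value c
  calc u * (h⁻¹ * u * h) * (h⁻¹ * h⁻¹ * u * h * h)
      = u * (u * c) * (u * c * (c * (c⁻¹ * h⁻¹ * c * h))) := by rw [hc_def]; group
    _ = u ^ 3 * c ^ 3 * (c⁻¹ * h⁻¹ * c * h) := mul_mul_mul_eq_pow_three_of_commute hc _

/-- Let `G` be a group, `N` an abelian normal subgroup, `u ∈ N`, `h ∈ G`. Then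
`u^{1+h+h²} = u·(h⁻¹uh)·(h⁻²uh²)` equals `u³·[u,h]³·[[u,h],h]` exactly, where
`[a,b] = a⁻¹b⁻¹ab`. -/
theorem trace_cube_exact (G : Type*) [Group G] (N : Subgroup G) [N.Normal]
    (hab : ∀ a ∈ N, ∀ b ∈ N, Commute a b) (u h : G) (hu : u ∈ N) :
    u * (h⁻¹ * u * h) * (h⁻¹ * h⁻¹ * u * h * h) =
      u ^ 3 * (u⁻¹ * h⁻¹ * u * h) ^ 3 *
        ((u⁻¹ * h⁻¹ * u * h)⁻¹ * h⁻¹ * (u⁻¹ * h⁻¹ * u * h) * h) := by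
  have hconj_mem : h⁻¹ * u * h ∈ N := by
    simpa using ‹N.Normal›.conj_mem u hu h⁻¹
  exact trace_cube_eq_of_commute_conj (hab u hu _ hconj_mem)
end
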